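/- With U and V as defined, for every real x satisfying M ≤ x < M+1 with M ≥ 1 an integer, and every 1 ≤ n ≤ M-1 and k ≥ 0, one has U(x;n,k) + V(x;n,k) ≥ 0. -/

import Mathlib

noncomputable def U (x n : ℝ) (k : ℕ) : ℝ :=
  (Real.log (x / n)) ^ (2 * k) / (Nat.factorial (2 * k) * Real.sqrt n)
    - (Real.sqrt n / 2) *
      ((Real.log (x / n)) ^ (2 * k + 2) / (Nat.factorial (2 * k + 2))
        + 2 * (Real.log (x / n)) ^ (2 * k + 1) / (Nat.factorial (2 * k + 1)))

noncomputable def V (x n : ℝ) (k : ℕ) : ℝ :=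
  (Real.sqrt (n + 1) / 2) *
      ((Real.log (x / (n + 1))) ^ (2 * k + 2) / (Nat.factorial (2 * k + 2))
        + 2 * (Real.log (x / (n + 1))) ^ (2 * k + 1) / (Nat.factorial (2 * k + 1)))
    - (Real.log (x / (n + 1))) ^ (2 * k + 2) / (Nat.factorial (2 * k + 2) * 4 * Real.sqrt (n + 1))

/-! With `L z = log (x / z)`, put `f z = L z ^ (2k) / ((2k)! √z)`, `q z = L z ^ (2k+2) / ((2k+2)! √z)` and
`G z = √z / 2 · (L z ^ (2k+2) / (2k+2)! + 2 L z ^ (2k+1) / (2k+1)!)`. Then `G' = q / 4 - f`, and `f`, `q` are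
decreasing on `(0, x]`. Since `U + V = f n - q (n+1) / 4 - (G n - G (n+1))`, the mean value theorem gives
`G n - G (n+1) = f c - q c / 4 ≤ f n - q (n+1) / 4` for some `c ∈ (n, n+1) ⊆ (0, x]`. -/

open Real Nat Set

noncomputable def sqrtLogTerm (x : ℝ) (p : ℕ) (z : ℝ) : ℝ :=
  log (x / z) ^ p / (p ! * √z)

noncomputable def sqrtLogPrimitive (x : ℝ) (p : ℕ) (z : ℝ) : ℝ :=
  √z / 2 * (log (x / z) ^ (p + 2) / (p + 2)! + 2 * log (x / z) ^ (p + 1) / (p + 1)!)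

theorem hasDerivAt_log_const_div {x z : ℝ} (hx : x ≠ 0) (hz : z ≠ 0) :
    HasDerivAt (fun z => log (x / z)) (-z⁻¹) z := by
  have : (fun z => log (x / z)) =ᶠ[nhds z] fun z => log x - log z := by
    filter_upwards [isOpen_ne.mem_nhds hz] with w hw
    exact log_div hx hw
  simpa using ((hasDerivAt_log hz).const_sub (log x)).congr_of_eventuallyEq this

theorem hasDerivAt_sqrtLogPrimitive {x z : ℝ} (p : ℕ) (hx : x ≠ 0) (hz : 0 < z) :
    HasDerivAt (sqrtLogPrimitive x p) (sqrtLogTerm x (p + 2) z / 4 - sqrtLogTerm x p z) z := by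
  have hL := hasDerivAt_log_const_div hx hz.ne'
  have h := ((hasDerivAt_sqrt hz.ne').div_const 2).mul
    (((hL.pow (p + 2)).div_const ((p + 2)! : ℝ)).add
      (((hL.pow (p + 1)).const_mul 2).div_const ((p + 1)! : ℝ)))
  refine h.congr_deriv ?_
  simp only [sqrtLogTerm, Pi.add_apply, Pi.pow_apply, Nat.add_sub_cancel]
  generalize log (x / z) = L
  obtain ⟨s, hs, rfl⟩ : ∃ s > 0, z = s ^ 2 := ⟨√z, sqrt_pos.mpr hz, (sq_sqrt hz.le).symm⟩
  rw [sqrt_sq hs.le, Nat.factorial_succ (p + 1), Nat.factorial_succ p]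
  push_cast
  field_simp
  ring

theorem sqrtLogTerm_antitoneOn (x : ℝ) (p : ℕ) : AntitoneOn (sqrtLogTerm x p) (Ioc 0 x) := by
  intro a ⟨ha, hax⟩ b ⟨hb, hbx⟩ hab
  have hx : 0 < x := ha.trans_le hax
  have hlog : log (x / b) ≤ log (x / a) := log_le_log (by positivity) (by gcongr)
  have hlog0 : 0 ≤ log (x / b) := log_nonneg ((one_le_div hb).mpr hbx)
  unfold sqrtLogTerm
  gcongr
  exact pow_nonneg (hlog0.trans hlog) p

theorem sqrtLogPrimitive_sub_le {x a b : ℝ} (p : ℕ) (ha : 0 < a) (hab : a < b) (hbx : b ≤ x) :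
    sqrtLogPrimitive x p a - sqrtLogPrimitive x p b
      ≤ (b - a) * (sqrtLogTerm x p a - sqrtLogTerm x (p + 2) b / 4) := by
  have hx : x ≠ 0 := (ha.trans (hab.trans_le hbx)).ne'
  have hderiv : ∀ z ∈ Ioo a b,
      HasDerivAt (sqrtLogPrimitive x p) (sqrtLogTerm x (p + 2) z / 4 - sqrtLogTerm x p z) z :=
    fun z hz => hasDerivAt_sqrtLogPrimitive p hx (ha.trans hz.1)
  have hcont : ContinuousOn (sqrtLogPrimitive x p) (Icc a b) := fun z hz =>
    (hasDerivAt_sqrtLogPrimitive p hx (ha.trans_le hz.1)).continuousAt.continuousWithinAt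
  obtain ⟨c, ⟨hac, hcb⟩, hc⟩ := exists_hasDerivAt_eq_slope _ _ hab hcont hderiv
  have hterm : sqrtLogTerm x p c ≤ sqrtLogTerm x p a :=
    sqrtLogTerm_antitoneOn x p ⟨ha, hac.le.trans (hcb.le.trans hbx)⟩
      ⟨ha.trans hac, hcb.le.trans hbx⟩ hac.le
  have hterm₂ : sqrtLogTerm x (p + 2) b ≤ sqrtLogTerm x (p + 2) c :=
    sqrtLogTerm_antitoneOn x (p + 2) ⟨ha.trans hac, hcb.le.trans hbx⟩ ⟨ha.trans hab, hbx⟩ hcb.le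
  have hba : 0 < b - a := sub_pos.mpr hab
  calc sqrtLogPrimitive x p a - sqrtLogPrimitive x p b
      = (b - a) * (sqrtLogTerm x p c - sqrtLogTerm x (p + 2) c / 4) := by
        rw [eq_div_iff hba.ne'] at hc
        linear_combination hc
    _ ≤ (b - a) * (sqrtLogTerm x p a - sqrtLogTerm x (p + 2) b / 4) := by gcongr

theorem U_add_V_eq (x n : ℝ) (k : ℕ) :
    U x n k + V x n k = sqrtLogTerm x (2 * k) n - sqrtLogTerm x (2 * k + 2) (n + 1) / 4
      - (sqrtLogPrimitive x (2 * k) n - sqrtLogPrimitive x (2 * k) (n + 1)) := by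
  simp only [U, V, sqrtLogTerm, sqrtLogPrimitive]
  ring

theorem stmt_8_general (M : ℕ) (x : ℝ) (hx1 : (M : ℝ) ≤ x)
    (n : ℕ) (hn1 : 1 ≤ n) (hn2 : n ≤ M - 1) (k : ℕ) :
    U x n k + V x n k ≥ 0 := by
  have hn : (0 : ℝ) < n := by exact_mod_cast hn1
  have hnx : (n : ℝ) + 1 ≤ x := le_trans (by exact_mod_cast (by omega : n + 1 ≤ M)) hx1
  have h := sqrtLogPrimitive_sub_le (2 * k) hn (lt_add_one (n : ℝ)) hnx
  rw [add_sub_cancel_left, one_mul] at h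
  rw [U_add_V_eq]
  linarith

theorem stmt_8 (M : ℕ) (hM : 1 ≤ M) (x : ℝ) (hx1 : (M : ℝ) ≤ x) (hx2 : x < M + 1)
    (n : ℕ) (hn1 : 1 ≤ n) (hn2 : n ≤ M - 1) (k : ℕ) :
    U x n k + V x n k ≥ 0 :=
  stmt_8_general M x hx1 n hn1 hn2 k
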